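/- Fix an integer N ≥ 3 and define T_M on triples of real numbers by T_M(α, β, γ) = ((β+γ)/2 + π(6−N)/(2N), (α+γ)/2 + π(N−6)/(4N), (α+β)/2 + π(N−6)/(4N)). For every triple (α, β, γ) with α + β + γ = π, the iterates T_Mⁿ(α, β, γ) converge, as n → ∞, to (2π/N, (N−2)π/(2N), (N−2)π/(2N)). -/
import Mathlib


open Real Filter

/-- The corrected triangle transformation for an `N`-simple mesh. -/
noncomputable def TM (N : ℕ) (p : ℝ × ℝ × ℝ) : ℝ × ℝ × ℝ :=
  ((p.2.1 + p.2.2) / 2 + π * (6 - (N : ℝ)) / (2 * N),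
   (p.1 + p.2.2) / 2 + π * ((N : ℝ) - 6) / (4 * N),
   (p.1 + p.2.1) / 2 + π * ((N : ℝ) - 6) / (4 * N))

theorem TM_iterates_tendsto_optimal (N : ℕ) (hN : 3 ≤ N)
    (α β γ : ℝ) (hsum : α + β + γ = π) :
    Tendsto (fun n : ℕ => (TM N)^[n] (α, β, γ)) atTop
      (nhds (2 * π / N, (N - 2) * π / (2 * N), (N - 2) * π / (2 * N))) := by
  have hN0 : (N : ℝ) ≠ 0 := Nat.cast_ne_zero.mpr (by omega)
  obtain rfl : γ = π - α - β := by linarith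
  set a : ℝ := 2 * π / N with ha
  set b : ℝ := ((N : ℝ) - 2) * π / (2 * N) with hb
  have key : ∀ n : ℕ, (TM N)^[n] (α, β, π - α - β) =
      (a + (-1/2 : ℝ)^n * (α - a), b + (-1/2 : ℝ)^n * (β - b),
       b + (-1/2 : ℝ)^n * ((π - α - β) - b)) := by
    intro n
    induction n with
    | zero => simp
    | succ n ih =>
      rw [Function.iterate_succ_apply', ih]
      simp only [TM, Prod.mk.injEq, ha, hb]
      refine ⟨?_, ?_, ?_⟩ <;> field_simp <;> ring
  have hr : Tendsto (fun n : ℕ => ((-1/2 : ℝ))^n) atTop (nhds 0) :=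
    tendsto_pow_atTop_nhds_zero_of_abs_lt_one (by rw [abs_lt]; constructor <;> norm_num)
  have hmain : Tendsto (fun n : ℕ =>
      (a + (-1/2 : ℝ)^n * (α - a), b + (-1/2 : ℝ)^n * (β - b),
       b + (-1/2 : ℝ)^n * ((π - α - β) - b))) atTop (nhds (a, b, b)) := by
    have h1 := ((hr.mul_const (α - a)).const_add a)
    have h2 := ((hr.mul_const (β - b)).const_add b)
    have h3 := ((hr.mul_const ((π - α - β) - b)).const_add b)
    simpa using h1.prodMk_nhds (h2.prodMk_nhds h3)
  simpa only [key] using hmain
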